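/- Let X be a finite abstract simplicial complex and f : X → X a simplicial map. There is a unique function L from subcomplexes of X to ℝ satisfying: (1) Valuation: L(∅)=0 and L(A∪B)=L(A)+L(B)−L(A∩B); (2) Simplex axiom: for every simplex x̄, L(x̄) = (−1)^{dim x} c(f, x) + L(∂x̄). Moreover this unique L is given by L(A) = Σ_{ρ ∈ A} (−1)^{dim ρ} c(f, ρ). -/
import Mathlib


/-- An abstract simplicial complex on vertex set `V`: a finite collection of
nonempty finite sets closed under nonempty subsets. -/
def IsComplex {V : Type*} [DecidableEq V] (X : Finset (Finset V)) : Prop :=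
  (∀ a ∈ X, a.Nonempty) ∧ ∀ a ∈ X, ∀ b ⊆ a, b.Nonempty → b ∈ X

/-- `A` is a subcomplex of `X`. -/
def IsSubcomplex {V : Type*} [DecidableEq V] (X A : Finset (Finset V)) : Prop :=
  A ⊆ X ∧ IsComplex A

/-- The simplex generated by a face `x`: all nonempty subsets of `x`. -/
def simplexOf {V : Type*} [DecidableEq V] (x : Finset V) : Finset (Finset V) :=
  x.powerset.erase ∅

/-- The boundary complex of the simplex on `x`: all proper nonempty subsets of `x`. -/
def boundaryOf {V : Type*} [DecidableEq V] (x : Finset V) : Finset (Finset V) :=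
  (x.powerset.erase ∅).erase x

lemma mem_simplexOf {V : Type*} [DecidableEq V] {x b : Finset V} :
    b ∈ simplexOf x ↔ b ≠ ∅ ∧ b ⊆ x := by
  simp [simplexOf]

lemma mem_boundaryOf {V : Type*} [DecidableEq V] {x b : Finset V} :
    b ∈ boundaryOf x ↔ b ≠ x ∧ b ≠ ∅ ∧ b ⊆ x := by
  simp [boundaryOf]

lemma simplexOf_eq_insert {V : Type*} [DecidableEq V] {x : Finset V} (hx : x.Nonempty) :
    simplexOf x = insert x (boundaryOf x) := by
  rw [boundaryOf, Finset.insert_erase]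
  · rfl
  · simp [simplexOf, hx.ne_empty]

lemma not_mem_boundaryOf {V : Type*} [DecidableEq V] (x : Finset V) :
    x ∉ boundaryOf x := by simp [mem_boundaryOf]

/-- there is a unique real-valued function `L` on subcomplexes of `X`
satisfying the valuation axiom and the simplex axiom
`L(x̄) = (−1)^{dim x} c(f,x) + L(∂x̄)`, and it is given by
`L A = ∑_{ρ ∈ A} (−1)^{dim ρ} c(f,ρ)`. -/
theorem stmt4 {V : Type*} [DecidableEq V] (X : Finset (Finset V)) (hX : IsComplex X)
    (c : Finset V → ℝ) :
    -- existence: the explicit formula satisfies both axioms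
    ((∑ ρ ∈ (∅ : Finset (Finset V)), (-1 : ℝ) ^ (ρ.card + 1) * c ρ) = 0 ∧
     (∀ A B, IsSubcomplex X A → IsSubcomplex X B →
        (∑ ρ ∈ A ∪ B, (-1 : ℝ) ^ (ρ.card + 1) * c ρ)
          = (∑ ρ ∈ A, (-1 : ℝ) ^ (ρ.card + 1) * c ρ)
            + (∑ ρ ∈ B, (-1 : ℝ) ^ (ρ.card + 1) * c ρ)
            - ∑ ρ ∈ A ∩ B, (-1 : ℝ) ^ (ρ.card + 1) * c ρ) ∧
     (∀ x ∈ X, (∑ ρ ∈ simplexOf x, (-1 : ℝ) ^ (ρ.card + 1) * c ρ)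
        = (-1 : ℝ) ^ (x.card + 1) * c x
          + ∑ ρ ∈ boundaryOf x, (-1 : ℝ) ^ (ρ.card + 1) * c ρ)) ∧
    -- uniqueness: any function satisfying both axioms is given by the formula
    (∀ L : Finset (Finset V) → ℝ, L ∅ = 0 →
      (∀ A B, IsSubcomplex X A → IsSubcomplex X B →
        L (A ∪ B) = L A + L B - L (A ∩ B)) →
      (∀ x ∈ X, L (simplexOf x)
        = (-1 : ℝ) ^ (x.card + 1) * c x + L (boundaryOf x)) →
      ∀ A, IsSubcomplex X A → L A = ∑ ρ ∈ A, (-1 : ℝ) ^ (ρ.card + 1) * c ρ) := by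
  constructor
  · refine ⟨Finset.sum_empty, ?_, ?_⟩
    · intro A B _ _
      have h : (∑ ρ ∈ A ∪ B, (-1 : ℝ) ^ (ρ.card + 1) * c ρ)
          + (∑ ρ ∈ A ∩ B, (-1 : ℝ) ^ (ρ.card + 1) * c ρ)
          = (∑ ρ ∈ A, (-1 : ℝ) ^ (ρ.card + 1) * c ρ)
            + (∑ ρ ∈ B, (-1 : ℝ) ^ (ρ.card + 1) * c ρ) := Finset.sum_union_inter
      linarith
    · intro x hx
      have hxne := hX.1 x hx
      rw [simplexOf_eq_insert hxne, Finset.sum_insert (not_mem_boundaryOf x)]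
  · intro L h0 hval hsimp A hA
    have key : ∀ n (A : Finset (Finset V)), A.card ≤ n → IsSubcomplex X A →
        L A = ∑ ρ ∈ A, (-1 : ℝ) ^ (ρ.card + 1) * c ρ := by
      intro n
      induction n with
      | zero =>
        intro A hcard _
        have : A = ∅ := Finset.card_eq_zero.mp (Nat.le_zero.mp hcard)
        simp [this, h0]
      | succ n ih =>
        intro A hcard hA
        rcases A.eq_empty_or_nonempty with rfl | hAne
        · simp [h0]
        · obtain ⟨x, hxA, hxmax⟩ := A.exists_max_image Finset.card hAne
          have hxX : x ∈ X := hA.1 hxA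
          have hxne : x.Nonempty := hX.1 x hxX
          set B := A.erase x with hB
          have hSsubA : simplexOf x ⊆ A := by
            intro b hb
            rw [mem_simplexOf] at hb
            exact hA.2.2 x hxA b hb.2 (Finset.nonempty_iff_ne_empty.mpr hb.1)
          have hAeq : A = B ∪ simplexOf x := by
            ext a
            constructor
            · intro ha
              rcases eq_or_ne a x with rfl | hne
              · exact Finset.mem_union_right _ (mem_simplexOf.mpr ⟨hxne.ne_empty, subset_rfl⟩)
              · exact Finset.mem_union_left _ (Finset.mem_erase.mpr ⟨hne, ha⟩)
            · intro ha
              rcases Finset.mem_union.mp ha with h | h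
              · exact Finset.mem_of_mem_erase h
              · exact hSsubA h
          have hInt : B ∩ simplexOf x = boundaryOf x := by
            ext b
            simp only [Finset.mem_inter, Finset.mem_erase, mem_simplexOf, mem_boundaryOf, hB]
            constructor
            · rintro ⟨⟨hne, _⟩, hb⟩
              exact ⟨hne, hb⟩
            · rintro ⟨hne, hb⟩
              exact ⟨⟨hne, hSsubA (mem_simplexOf.mpr hb)⟩, hb⟩
          have hBsub : IsSubcomplex X B := by
            refine ⟨(Finset.erase_subset _ _).trans hA.1, fun a ha => hA.2.1 a (Finset.mem_of_mem_erase ha), ?_⟩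
            intro a ha b hb hbne
            have haA : a ∈ A := Finset.mem_of_mem_erase ha
            have hbA : b ∈ A := hA.2.2 a haA b hb hbne
            refine Finset.mem_erase.mpr ⟨?_, hbA⟩
            rintro rfl
            have : a = b := (Finset.eq_of_subset_of_card_le hb (hxmax a haA)).symm
            exact (Finset.mem_erase.mp ha).1 this
          have hSsub : IsSubcomplex X (simplexOf x) := by
            refine ⟨hSsubA.trans hA.1, fun a ha => ?_, ?_⟩
            · exact Finset.nonempty_iff_ne_empty.mpr (mem_simplexOf.mp ha).1
            · intro a ha b hb hbne
              exact mem_simplexOf.mpr ⟨hbne.ne_empty, hb.trans (mem_simplexOf.mp ha).2⟩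
          have hBcard : B.card ≤ n := by
            have h1 : B.card = A.card - 1 := Finset.card_erase_of_mem hxA
            have h2 : 0 < A.card := Finset.card_pos.mpr hAne
            omega
          have hLB := ih B hBcard hBsub
          have hLS := hsimp x hxX
          have hLA : L A = L B + L (simplexOf x) - L (boundaryOf x) := by
            rw [hAeq, hval B (simplexOf x) hBsub hSsub, hInt]
          have hsum : ∑ ρ ∈ A, (-1 : ℝ) ^ (ρ.card + 1) * c ρ
              = (-1 : ℝ) ^ (x.card + 1) * c x + ∑ ρ ∈ B, (-1 : ℝ) ^ (ρ.card + 1) * c ρ := by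
            exact (Finset.add_sum_erase A (fun ρ => (-1 : ℝ) ^ (ρ.card + 1) * c ρ) hxA).symm
          rw [hLA, hLS, hLB, hsum]
          ring
    exact key A.card A le_rfl hA
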